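/- (Posterior on Truth) The P-probability that inf_{t∈ℕ} w(P | x_{<t}) = 0 is zero; that is, with P-probability 1, the posterior weight on the true measure P is bounded away from 0 uniformly in t. -/

import Mathlib

/-! The Bayes mixture `ξ = ∑ᵢ w(Qᵢ) Qᵢ` has total mass `1`, and the posterior weight of
`P = Q i₀` at `x_{<t}` is `w(P) P(x_{<t}) / ξ(x_{<t})`. It drops below `w(P) ε` only when the
prefix is `ε`-bad, `P(x_{<t}) ≤ ε ξ(x_{<t})`. The sequences that ever hit a bad prefix form the
disjoint union of the cylinders of their *first* bad prefixes, so their `P`-mass is at most `ε`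
times their `ξ`-mass, hence at most `ε`. Letting `ε → 0` proves the theorem. -/

open MeasureTheory Filter
open scoped ENNReal

/-- The cylinder set of infinite sequences agreeing with `x` on the first `t` coordinates,
i.e. the set of sequences beginning with the prefix `x_{<t}`. -/
def cyl {X : Type*} (x : ℕ → X) (t : ℕ) : Set (ℕ → X) := {y | ∀ i < t, y i = x i}

/-- `Q(x_{<t})`: the `Q`-measure of the cylinder set of sequences beginning with `x_{<t}`,
as a real number. -/
noncomputable def prefProb {X : Type*} [MeasurableSpace X]
    (Q : Measure (ℕ → X)) (x : ℕ → X) (t : ℕ) : ℝ :=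
  (Q (cyl x t)).toReal

/-- The posterior weight `w(Q i | x_{<t}) = w(Q i)·(Q i)(x_{<t}) / ∑_{j} w(Q j)·(Q j)(x_{<t})`. -/
noncomputable def post {X ι : Type*} [MeasurableSpace X]
    (w : ι → ℝ) (Q : ι → Measure (ℕ → X)) (i : ι) (x : ℕ → X) (t : ℕ) : ℝ :=
  w i * prefProb (Q i) x t / ∑' j, w j * prefProb (Q j) x t

section Cylinder

variable {X : Type*}

theorem mem_cyl_self (x : ℕ → X) (t : ℕ) : x ∈ cyl x t := fun _ _ => rfl

theorem cyl_anti (x : ℕ → X) : Antitone (cyl x) :=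
  fun _ _ hst _ hy i hi => hy i (hi.trans_le hst)

theorem cyl_eq_of_mem {x y : ℕ → X} {t : ℕ} (hy : y ∈ cyl x t) : cyl y t = cyl x t := by
  ext z
  exact ⟨fun hz i hi => (hz i hi).trans (hy i hi), fun hz i hi => (hz i hi).trans (hy i hi).symm⟩

theorem countable_range_cyl [Countable X] (t : ℕ) :
    (Set.range fun x : ℕ → X => cyl x t).Countable := by
  refine (Set.countable_range fun u : Fin t → X => {y : ℕ → X | ∀ i : Fin t, y i = u i}).mono ?_
  rintro _ ⟨x, rfl⟩
  exact ⟨fun i => x i, by ext y; simp [cyl, Fin.forall_iff]⟩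

theorem measurableSet_cyl [MeasurableSpace X] [MeasurableSingletonClass X] (x : ℕ → X) (t : ℕ) :
    MeasurableSet (cyl x t) := by
  have h : cyl x t = ⋂ i ∈ Finset.range t, (fun y : ℕ → X => y i) ⁻¹' {x i} := by
    ext y; simp [cyl]
  rw [h]
  exact .biInter (Finset.range t).countable_toSet
    fun i _ => measurable_pi_apply i (measurableSet_singleton _)

end Cylinder

section FirstHit

variable {X : Type*} (p : Set (ℕ → X) → Prop)

/-- The first `t` with `p (cyl x t)`, or `0` if there is none. -/
noncomputable def hitTime (x : ℕ → X) : ℕ := sInf {t | p (cyl x t)}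

variable {p}

theorem hitTime_le {x : ℕ → X} {t : ℕ} (h : p (cyl x t)) : hitTime p x ≤ t := Nat.sInf_le h

theorem hitTime_spec {x : ℕ → X} {t : ℕ} (h : p (cyl x t)) : p (cyl x (hitTime p x)) :=
  Nat.sInf_mem (s := {t | p (cyl x t)}) ⟨t, h⟩

theorem hitTime_eq_of_mem {x y : ℕ → X} {t : ℕ} (h : p (cyl x t))
    (hy : y ∈ cyl x (hitTime p x)) : hitTime p y = hitTime p x := by
  have hcyl : ∀ s ≤ hitTime p x, cyl y s = cyl x s := fun s hs =>
    cyl_eq_of_mem (cyl_anti x hs hy)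
  have hy_hit : p (cyl y (hitTime p x)) := by rw [hcyl _ le_rfl]; exact hitTime_spec h
  have hle : hitTime p y ≤ hitTime p x := hitTime_le hy_hit
  refine le_antisymm hle (hitTime_le ?_)
  rw [← hcyl _ hle]
  exact hitTime_spec hy_hit

/-- The set is the countable disjoint union of the cylinders of first hitting prefixes. -/
theorem measure_setOf_exists_cyl_le [Countable X] [MeasurableSpace X]
    [MeasurableSingletonClass X]
    {μ ν : Measure (ℕ → X)} (hp : ∀ x t, p (cyl x t) → μ (cyl x t) ≤ ν (cyl x t)) :
    μ {x | ∃ t, p (cyl x t)} ≤ ν {x | ∃ t, p (cyl x t)} := by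
  set E := {x : ℕ → X | ∃ t, p (cyl x t)}
  set 𝒟 := (fun x => cyl x (hitTime p x)) '' E
  have hE : E = ⋃₀ 𝒟 := by
    ext y
    refine ⟨fun hy => ⟨_, ⟨y, hy, rfl⟩, mem_cyl_self y _⟩, ?_⟩
    rintro ⟨_, ⟨x, ⟨t, hx⟩, rfl⟩, hy⟩
    refine ⟨hitTime p y, ?_⟩
    rw [hitTime_eq_of_mem hx hy, cyl_eq_of_mem hy]
    exact hitTime_spec hx
  have h𝒟_countable : 𝒟.Countable :=
    (Set.countable_iUnion countable_range_cyl).mono <| by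
      rintro _ ⟨x, -, rfl⟩
      exact Set.mem_iUnion.2 ⟨_, x, rfl⟩
  have h𝒟_disjoint : 𝒟.Pairwise Disjoint := by
    rintro _ ⟨x, ⟨s, hx⟩, rfl⟩ _ ⟨x', ⟨s', hx'⟩, rfl⟩ hne
    refine Set.disjoint_left.2 fun y hy hy' => hne ?_
    dsimp only at hy hy' ⊢
    rw [← cyl_eq_of_mem hy, ← cyl_eq_of_mem hy', ← hitTime_eq_of_mem hx hy,
      ← hitTime_eq_of_mem hx' hy']
  have h𝒟_meas : ∀ C ∈ 𝒟, MeasurableSet C := by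
    rintro _ ⟨x, -, rfl⟩
    exact measurableSet_cyl x _
  rw [hE, measure_sUnion h𝒟_countable h𝒟_disjoint h𝒟_meas,
    measure_sUnion h𝒟_countable h𝒟_disjoint h𝒟_meas]
  refine ENNReal.tsum_le_tsum ?_
  rintro ⟨_, x, ⟨t, hx⟩, rfl⟩
  exact hp x _ (hitTime_spec hx)

end FirstHit

theorem measure_setOf_exists_cyl_le_mul_le {X : Type*} [Countable X] [MeasurableSpace X]
    [MeasurableSingletonClass X] (P ξ : Measure (ℕ → X)) (c : ℝ≥0∞) :
    P {x | ∃ t, P (cyl x t) ≤ c * ξ (cyl x t)} ≤ c * ξ Set.univ :=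
  calc P {x | ∃ t, P (cyl x t) ≤ c * ξ (cyl x t)}
      ≤ (c • ξ) {x | ∃ t, P (cyl x t) ≤ c * ξ (cyl x t)} :=
        measure_setOf_exists_cyl_le (p := fun C => P C ≤ c * ξ C) fun _ _ h => h
    _ ≤ c * ξ Set.univ := mul_le_mul_right (measure_mono (Set.subset_univ _)) c

section BayesMixture

variable {Ω ι : Type*} [MeasurableSpace Ω]

noncomputable def bayesMixture (w : ι → ℝ) (Q : ι → Measure Ω) : Measure Ω :=
  Measure.sum fun i => ENNReal.ofReal (w i) • Q i

variable {w : ι → ℝ} {Q : ι → Measure Ω}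

theorem bayesMixture_apply {s : Set Ω} (hs : MeasurableSet s) :
    bayesMixture w Q s = ∑' i, ENNReal.ofReal (w i) * Q i s := by
  simp [bayesMixture, Measure.sum_apply _ hs]

theorem ofReal_mul_le_bayesMixture {s : Set Ω} (hs : MeasurableSet s) (i : ι) :
    ENNReal.ofReal (w i) * Q i s ≤ bayesMixture w Q s := by
  rw [bayesMixture_apply hs]
  exact ENNReal.le_tsum i

theorem isProbabilityMeasure_bayesMixture [∀ i, IsProbabilityMeasure (Q i)]
    (hw : ∀ i, 0 ≤ w i) (hw1 : ∑' i, w i = 1) : IsProbabilityMeasure (bayesMixture w Q) := by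
  have hsum : Summable w := by
    by_contra h
    simp [tsum_eq_zero_of_not_summable h] at hw1
  constructor
  rw [bayesMixture_apply MeasurableSet.univ]
  simp only [measure_univ, mul_one]
  rw [← ENNReal.ofReal_tsum_of_nonneg hw hsum, hw1, ENNReal.ofReal_one]

theorem toReal_bayesMixture_apply [∀ i, IsFiniteMeasure (Q i)] (hw : ∀ i, 0 ≤ w i)
    {s : Set Ω} (hs : MeasurableSet s) :
    (bayesMixture w Q s).toReal = ∑' i, w i * (Q i s).toReal := by
  rw [bayesMixture_apply hs, ENNReal.tsum_toReal_eq fun i => by finiteness]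
  simp [ENNReal.toReal_ofReal (hw _)]

end BayesMixture

section Posterior

variable {X ι : Type*} [MeasurableSpace X] [MeasurableSingletonClass X]
  {w : ι → ℝ} {Q : ι → Measure (ℕ → X)} [∀ i, IsFiniteMeasure (Q i)]

theorem post_eq (hw : ∀ i, 0 ≤ w i) (i : ι) (x : ℕ → X) (t : ℕ) :
    post w Q i x t = w i * (Q i (cyl x t)).toReal / (bayesMixture w Q (cyl x t)).toReal := by
  rw [post, toReal_bayesMixture_apply hw (measurableSet_cyl x t)]
  rfl

theorem le_ofReal_mul_bayesMixture_of_post_lt [IsFiniteMeasure (bayesMixture w Q)]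
    (hw : ∀ i, 0 ≤ w i) {i : ι} (hwi : 0 < w i) {x : ℕ → X} {t : ℕ} {ε : ℝ} (hε : 0 ≤ ε)
    (h : post w Q i x t < w i * ε) :
    Q i (cyl x t) ≤ ENNReal.ofReal ε * bayesMixture w Q (cyl x t) := by
  rw [post_eq hw] at h
  set q := (Q i (cyl x t)).toReal
  set m := (bayesMixture w Q (cyl x t)).toReal
  have hdom : w i * q ≤ m := by
    have := ofReal_mul_le_bayesMixture (w := w) (Q := Q) (measurableSet_cyl x t) i
    rwa [← ENNReal.toReal_le_toReal (by finiteness) (by finiteness), ENNReal.toReal_mul,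
      ENNReal.toReal_ofReal hwi.le] at this
  have hq : q ≤ ε * m := by
    have hq0 : 0 ≤ q := ENNReal.toReal_nonneg
    have hm0 : 0 ≤ m := ENNReal.toReal_nonneg
    rcases hm0.eq_or_lt with hm | hm
    · rw [← hm, mul_zero]
      nlinarith
    · rw [div_lt_iff₀ hm] at h
      nlinarith
  rwa [← ENNReal.toReal_le_toReal (by finiteness) (by finiteness), ENNReal.toReal_mul,
    ENNReal.toReal_ofReal hε]

end Posterior

theorem posterior_on_truth_general
    {X : Type*} [Fintype X] [MeasurableSpace X] [MeasurableSingletonClass X]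
    {ι : Type*}
    (Q : ι → Measure (ℕ → X)) (hQ : ∀ i, IsProbabilityMeasure (Q i))
    (w : ι → ℝ) (hw : ∀ i, 0 < w i) (hw1 : ∑' i, w i = 1)
    (i₀ : ι) :
    (Q i₀) {x | (⨅ t : ℕ, post w Q i₀ x t) = (0 : ℝ)} = 0 := by
  have hw0 : ∀ i, 0 ≤ w i := fun i => (hw i).le
  have := isProbabilityMeasure_bayesMixture hw0 hw1 (Q := Q)
  refine le_antisymm (ENNReal.le_of_forall_pos_le_add fun ε hε _ => ?_) bot_le
  have hbad : {x | (⨅ t : ℕ, post w Q i₀ x t) = 0} ⊆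
      {x | ∃ t, Q i₀ (cyl x t) ≤ ENNReal.ofReal ε * bayesMixture w Q (cyl x t)} := by
    intro x hx
    obtain ⟨t, ht⟩ := exists_lt_of_ciInf_lt (hx.trans_lt (mul_pos (hw i₀) hε))
    exact ⟨t, le_ofReal_mul_bayesMixture_of_post_lt hw0 (hw i₀) ε.2 ht⟩
  calc Q i₀ {x | (⨅ t : ℕ, post w Q i₀ x t) = 0}
      ≤ ENNReal.ofReal ε * bayesMixture w Q Set.univ :=
        (measure_mono hbad).trans (measure_setOf_exists_cyl_le_mul_le _ _ _)
    _ = 0 + ε := by simp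

/-- **Posterior on Truth.** The `P`-probability that `inf_t w(P | x_{<t}) = 0` is zero: with
`P`-probability 1, the posterior weight on the true measure `P = Q i₀` is bounded away from
`0` uniformly in `t`. -/
theorem posterior_on_truth
    {X : Type*} [Fintype X] [Nonempty X] [MeasurableSpace X] [MeasurableSingletonClass X]
    {ι : Type*} [Countable ι]
    (Q : ι → Measure (ℕ → X)) (hQ : ∀ i, IsProbabilityMeasure (Q i))
    (w : ι → ℝ) (hw : ∀ i, 0 < w i) (hw1 : ∑' i, w i = 1)
    (i₀ : ι) :
    (Q i₀) {x | (⨅ t : ℕ, post w Q i₀ x t) = (0 : ℝ)} = 0 :=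
  posterior_on_truth_general Q hQ w hw hw1 i₀
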